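/- Let G be a RAN whose clique-tree T contains two vertices q_i, q_j of degree 4 joined by a neat path that is a fat path (either q_i and q_j are adjacent, or all internal vertices of the path have degree exactly 3 in T). Then τ(G) < 1, and hence G is non-Hamiltonian. -/

import Mathlib

open SimpleGraph ENNReal

namespace RanTough

/-- Number of connected components after deleting the vertex set `S` from `G`. -/
noncomputable def compCount {V : Type*} (G : SimpleGraph V) (S : Finset V) : ℕ :=
  Nat.card (G.induce ((↑S : Set V)ᶜ)).ConnectedComponent

/-- `G` is `t`-tough: `t * ω(G - S) ≤ |S|` whenever deleting `S` disconnects `G`. -/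
def IsTough {V : Type*} (G : SimpleGraph V) (t : ℝ≥0∞) : Prop :=
  ∀ S : Finset V, 1 < compCount G S → t * compCount G S ≤ S.card

/-- The toughness of `G`: the largest `t` such that `G` is `t`-tough
(`⊤` for complete graphs). -/
noncomputable def toughness {V : Type*} (G : SimpleGraph V) : ℝ≥0∞ :=
  sSup {t : ℝ≥0∞ | IsTough G t}

/-- A vertex is simplicial if its neighborhood is a clique. -/
def IsSimplicial {V : Type*} (G : SimpleGraph V) (v : V) : Prop :=
  G.IsClique (G.neighborSet v)

/-- `G` is a `k`-tree: there is a construction ordering starting from a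
`(k+1)`-clique in which each later vertex is attached to a `k`-clique
of earlier vertices. -/
def IsKTree {V : Type*} [Fintype V] (k : ℕ) (G : SimpleGraph V) : Prop :=
  k + 1 ≤ Fintype.card V ∧
  ∃ e : Fin (Fintype.card V) ≃ V,
    (∀ i j : Fin (Fintype.card V), (i : ℕ) < k + 1 → (j : ℕ) < k + 1 → i ≠ j →
      G.Adj (e i) (e j)) ∧
    (∀ i : Fin (Fintype.card V), k + 1 ≤ (i : ℕ) →
      ∃ S : Finset V, S.card = k ∧ G.IsClique (S : Set V) ∧
        ∀ w : V, (G.Adj (e i) w ∧ ∃ j, j < i ∧ e j = w) ↔ w ∈ S)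

/-- `Q` is a maximal clique of `G`. -/
def IsMaximalClique {V : Type*} (G : SimpleGraph V) (Q : Finset V) : Prop :=
  G.IsClique (Q : Set V) ∧ ∀ R : Finset V, G.IsClique (R : Set V) → Q ⊆ R → Q = R

/-- A clique-tree of `G`: a tree on the maximal cliques of `G` satisfying the
induced subtree property. -/
def IsCliqueTree {V : Type*} (G : SimpleGraph V)
    (T : SimpleGraph {Q : Finset V // IsMaximalClique G Q}) : Prop :=
  T.IsTree ∧ ∀ v : V,
    (T.induce {Q : {Q : Finset V // IsMaximalClique G Q} | v ∈ (Q : Finset V)}).Connected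

/-- A Random Apollonian Network: a uniquely representable (unique clique-tree) 3-tree. -/
def IsRAN {V : Type*} [Fintype V] (G : SimpleGraph V) : Prop :=
  IsKTree 3 G ∧ ∃! T : SimpleGraph {Q : Finset V // IsMaximalClique G Q}, IsCliqueTree G T

/-- `S` separates the nonadjacent vertices `u` and `v`. -/
def IsUVSeparator {V : Type*} (G : SimpleGraph V) (u v : V) (S : Finset V) : Prop :=
  u ≠ v ∧ ¬ G.Adj u v ∧ u ∉ S ∧ v ∉ S ∧ ∀ p : G.Walk u v, ∃ w ∈ p.support, w ∈ S

/-- `S` is a minimal vertex separator of `G`. -/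
def IsMinVtxSep {V : Type*} (G : SimpleGraph V) (S : Finset V) : Prop :=
  ∃ u v : V, IsUVSeparator G u v S ∧ ∀ S' : Finset V, S' ⊂ S → ¬ IsUVSeparator G u v S'

/-- The multiplicity of `S` as a minimal vertex separator with respect to
the clique-tree `T`: the number of edges of `T` whose endpoint intersection is `S`. -/
noncomputable def sepMultiplicity {V : Type*} [DecidableEq V] (G : SimpleGraph V)
    (T : SimpleGraph {Q : Finset V // IsMaximalClique G Q}) (S : Finset V) : ℕ :=
  {e ∈ T.edgeSet | ∃ Q Q' : {Q : Finset V // IsMaximalClique G Q},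
    e = s(Q, Q') ∧ (Q : Finset V) ∩ (Q' : Finset V) = S}.ncard

/-- Degree of a vertex in a graph, via `Set.ncard` (no instances needed). -/
noncomputable def deg {α : Type*} (T : SimpleGraph α) (q : α) : ℕ :=
  {r | T.Adj q r}.ncard

/-- A `k`-regular tree: every vertex that is not a leaf has degree `k`. -/
def IsRegularTree {α : Type*} (k : ℕ) (T : SimpleGraph α) : Prop :=
  T.IsTree ∧ ∀ q : α, deg T q = 1 ∨ deg T q = k

/-- Chordal: every cycle of length at least 4 has a chord. -/
def IsChordal {V : Type*} (G : SimpleGraph V) : Prop :=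
  ∀ (v : V) (c : G.Walk v v), c.IsCycle → 4 ≤ c.length →
    ∃ x y : V, x ∈ c.support ∧ y ∈ c.support ∧ G.Adj x y ∧ s(x, y) ∉ c.edges

/-- `H` is a minor of `G`. -/
def IsMinor {W V : Type*} (H : SimpleGraph W) (G : SimpleGraph V) : Prop :=
  ∃ B : W → Set V,
    (∀ w, (G.induce (B w)).Connected) ∧
    (∀ w₁ w₂, w₁ ≠ w₂ → Disjoint (B w₁) (B w₂)) ∧
    (∀ w₁ w₂, H.Adj w₁ w₂ → ∃ u ∈ B w₁, ∃ v ∈ B w₂, G.Adj u v)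

/-- Planar (Wagner): no `K₅` and no `K₃,₃` minor. -/
def IsPlanar {V : Type*} (G : SimpleGraph V) : Prop :=
  ¬ IsMinor (⊤ : SimpleGraph (Fin 5)) G ∧
  ¬ IsMinor (completeBipartiteGraph (Fin 3) (Fin 3)) G

end RanTough

/-!
Let `S` be the union of the cliques on the path `qᵢ = q₀, …, qₙ = qⱼ`. Adjacent cliques in the
clique tree of a 3-tree share three vertices, so `|S| ≤ n + 4`. A clique `r` adjacent to the path
but not on it has a vertex outside `S`, and since `S` contains the separator `r ∩ q` of the tree
edge `rq`, these vertices lie in distinct components of `G - S`. In `T` each end of the path has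
three such neighbours and each inner vertex at least one, so `G - S` has at least `n + 5 > |S|`
components. Hence `τ(G) < 1`, while Hamiltonian graphs are 1-tough.
-/

namespace SimpleGraph

open Finset

section TreeSides

variable {α : Type*} {T : SimpleGraph α} {A B : α}

theorem Preconnected.reachable_deleteEdges_or (hT : T.Preconnected) (R : α) :
    (T.deleteEdges {s(A, B)}).Reachable A R ∨ (T.deleteEdges {s(A, B)}).Reachable B R := by
  have key : ∀ {X Y : α} (w : T.Walk X Y),
      (T.deleteEdges {s(A, B)}).Reachable A Y ∨ (T.deleteEdges {s(A, B)}).Reachable B Y →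
      (T.deleteEdges {s(A, B)}).Reachable A X ∨ (T.deleteEdges {s(A, B)}).Reachable B X := by
    intro X Y w hY
    induction w with
    | nil => exact hY
    | @cons X c Y h q ih =>
      by_cases he : s(X, c) = s(A, B)
      · rcases Sym2.eq_iff.mp he with ⟨rfl, -⟩ | ⟨rfl, -⟩
        exacts [.inl .rfl, .inr .rfl]
      · have hadj : (T.deleteEdges {s(A, B)}).Adj c X := by
          refine (deleteEdges_adj ..).mpr ⟨h.symm, ?_⟩
          rwa [Set.mem_singleton_iff, Sym2.eq_swap]
        exact (ih hY).imp (·.trans hadj.reachable) (·.trans hadj.reachable)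
  obtain ⟨w⟩ := hT R A
  exact key w (.inl .rfl)

theorem IsAcyclic.mem_support_of_reachable_deleteEdges (hT : T.IsAcyclic) (hAB : T.Adj A B)
    {R R' : α} (w : T.Walk R R') (hR : (T.deleteEdges {s(A, B)}).Reachable A R)
    (hR' : (T.deleteEdges {s(A, B)}).Reachable B R') :
    A ∈ w.support ∧ B ∈ w.support := by
  have hbridge : ¬ (T.deleteEdges {s(A, B)}).Reachable A B :=
    isAcyclic_iff_forall_adj_isBridge.mp hT hAB
  have he := w.mem_edges_of_not_reachable_deleteEdges fun h =>
    hbridge (hR.trans (h.trans hR'.symm))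
  exact ⟨w.fst_mem_support_of_mem_edges he, w.snd_mem_support_of_mem_edges he⟩

theorem IsAcyclic.mem_of_preconnected_induce (hT : T.IsAcyclic) (hAB : T.Adj A B)
    {R R' : α} (hR : (T.deleteEdges {s(A, B)}).Reachable A R)
    (hR' : (T.deleteEdges {s(A, B)}).Reachable B R') {s : Set α} (hs : (T.induce s).Preconnected)
    (hRs : R ∈ s) (hR's : R' ∈ s) : A ∈ s ∧ B ∈ s := by
  obtain ⟨w⟩ := hs ⟨R, hRs⟩ ⟨R', hR's⟩
  obtain ⟨hA, hB⟩ := hT.mem_support_of_reachable_deleteEdges hAB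
    (w.map (Embedding.induce s).toHom) hR hR'
  rw [Walk.support_map, List.mem_map] at hA hB
  obtain ⟨a, -, rfl⟩ := hA
  obtain ⟨b, -, rfl⟩ := hB
  exact ⟨a.2, b.2⟩

end TreeSides

theorem Walk.reachable_deleteEdges_of_mem_support {α : Type*} [DecidableEq α] {T : SimpleGraph α}
    {u v : α} (p : T.Walk u v) {e : Sym2 α} (he : e ∉ p.edges) {x y : α} (hx : x ∈ p.support)
    (hy : y ∈ p.support) : (T.deleteEdges {e}).Reachable x y := by
  have toStart : ∀ {z} (hz : z ∈ p.support), (T.deleteEdges {e}).Reachable u z := fun hz =>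
    ⟨(p.takeUntil _ hz).toDeleteEdges {e} fun e' he' h =>
      he (h ▸ p.edges_takeUntil_subset_edges hz he')⟩
  exact (toStart hx).symm.trans (toStart hy)

theorem Walk.eq_or_eq_of_length_eq_one {α : Type*} {G : SimpleGraph α} {u v q : α}
    {p : G.Walk u v} (hp : p.length = 1) (hq : q ∈ p.support) : q = u ∨ q = v := by
  cases p with
  | nil => simp at hp
  | cons h p' =>
    cases p' with
    | nil => simpa using hq
    | cons => simp at hp

def vertexBoundary {α : Type*} [Fintype α] [DecidableEq α] (T : SimpleGraph α)
    [DecidableRel T.Adj] (s : Finset α) : Finset α :=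
  (s.biUnion fun q => T.neighborFinset q) \ s

section Forest

variable {α : Type*} [DecidableEq α] {T : SimpleGraph α} {u v : α}

theorem IsAcyclic.eq_of_adj_of_mem_support (hT : T.IsAcyclic) (p : T.Walk u v) {a b r : α}
    (ha : a ∈ p.support) (hb : b ∈ p.support) (hr : r ∉ p.support) (har : T.Adj a r)
    (hbr : T.Adj b r) : a = b := by
  by_contra hab
  have hadj : (T.deleteEdges {s(a, r)}).Adj b r := by
    refine (deleteEdges_adj ..).mpr ⟨hbr, fun h => ?_⟩
    rcases Sym2.eq_iff.mp h with ⟨rfl, -⟩ | ⟨rfl, -⟩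
    exacts [hab rfl, hr hb]
  exact isAcyclic_iff_forall_adj_isBridge.mp hT har
    ((p.reachable_deleteEdges_of_mem_support (fun he => hr (p.snd_mem_support_of_mem_edges he))
      ha hb).trans hadj.reachable)

theorem IsAcyclic.toSubgraph_adj_of_mem_support (hT : T.IsAcyclic) (p : T.Walk u v) {a b : α}
    (ha : a ∈ p.support) (hb : b ∈ p.support) (hab : T.Adj a b) : p.toSubgraph.Adj a b := by
  rw [Walk.adj_toSubgraph_iff_mem_edges]
  by_contra he
  exact isAcyclic_iff_forall_adj_isBridge.mp hT hab
    (p.reachable_deleteEdges_of_mem_support he ha hb)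

theorem Walk.IsPath.ncard_neighborSet_toSubgraph_add_le {p : T.Walk u v} (hp : p.IsPath)
    (huv : u ≠ v) {q : α} (hq : q ∈ p.support) :
    (p.toSubgraph.neighborSet q).ncard + (if q = u then 1 else 0) + (if q = v then 1 else 0)
      ≤ 2 := by
  have hnil : ¬ p.Nil := Walk.not_nil_of_ne huv
  by_cases hqu : q = u
  · subst hqu
    simp [hp.neighborSet_toSubgraph_startpoint hnil, huv]
  by_cases hqv : q = v
  · subst hqv
    simp [hp.neighborSet_toSubgraph_endpoint hnil, hqu]
  obtain ⟨i, rfl, hi⟩ := Walk.mem_support_iff_exists_getVert.mp hq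
  have hi0 : i ≠ 0 := by rintro rfl; exact hqu p.getVert_zero
  have hil : i < p.length := hi.lt_of_ne fun h => hqv (h ▸ p.getVert_length)
  simp [hp.ncard_neighborSet_toSubgraph_internal_eq_two hi0 hil, hqu, hqv]

variable [Fintype α] [DecidableRel T.Adj]

theorem IsAcyclic.length_add_five_le_card_vertexBoundary (hT : T.IsAcyclic) {p : T.Walk u v}
    (hp : p.IsPath) (huv : u ≠ v) (hu : 4 ≤ T.degree u) (hv : 4 ≤ T.degree v)
    (hinner : ∀ q ∈ p.support, q ≠ u → q ≠ v → 3 ≤ T.degree q) :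
    p.length + 5 ≤ #(T.vertexBoundary p.support.toFinset) := by
  set s := p.support.toFinset
  have hsplit : T.vertexBoundary s = s.biUnion fun q => T.neighborFinset q \ s := by
    ext r
    simp only [vertexBoundary, mem_sdiff, mem_biUnion, mem_neighborFinset]
    exact ⟨fun ⟨⟨a, ha, hadj⟩, hr⟩ => ⟨a, ha, hadj, hr⟩,
      fun ⟨a, ha, hadj, hr⟩ => ⟨⟨a, ha, hadj⟩, hr⟩⟩
  have hdisj : (s : Set α).PairwiseDisjoint fun q => T.neighborFinset q \ s := by
    intro a ha b hb hab
    refine Finset.disjoint_left.mpr fun r hra hrb => hab ?_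
    simp only [mem_sdiff, mem_neighborFinset, s, List.mem_toFinset] at hra hrb
    exact hT.eq_of_adj_of_mem_support p (by simpa [s] using ha) (by simpa [s] using hb) hra.2
      hra.1 hrb.1
  have hvertex : ∀ q ∈ s, 1 + (if q = u then 2 else 0) + (if q = v then 2 else 0) ≤
      #(T.neighborFinset q \ s) := by
    intro q hq
    rw [List.mem_toFinset] at hq
    have hpathNbrs : #(T.neighborFinset q ∩ s) ≤ (p.toSubgraph.neighborSet q).ncard := by
      rw [← Set.ncard_coe_finset]
      refine Set.ncard_le_ncard (fun r hr => ?_) (p.finite_neighborSet_toSubgraph)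
      simp only [coe_inter, Set.mem_inter_iff, mem_coe, mem_neighborFinset, s,
        List.mem_toFinset] at hr
      exact hT.toSubgraph_adj_of_mem_support p hq hr.2 hr.1
    have hends := hp.ncard_neighborSet_toSubgraph_add_le huv hq
    have hdeg := card_sdiff_add_card_inter (T.neighborFinset q) s
    rw [card_neighborFinset_eq_degree] at hdeg
    by_cases hqu : q = u
    · subst hqu; simp only [if_pos, if_neg huv] at hends ⊢; omega
    by_cases hqv : q = v
    · subst hqv; simp only [if_pos, if_neg hqu] at hends ⊢; omega
    have := hinner q hq hqu hqv
    simp only [if_neg hqu, if_neg hqv] at hends ⊢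
    omega
  have hcard : #s = p.length + 1 := by
    rw [List.toFinset_card_of_nodup hp.support_nodup, Walk.length_support]
  calc p.length + 5 = ∑ q ∈ s, (1 + (if q = u then 2 else 0) + (if q = v then 2 else 0)) := by
        simp [sum_add_distrib, hcard, s]
    _ ≤ ∑ q ∈ s, #(T.neighborFinset q \ s) := sum_le_sum hvertex
    _ = #(T.vertexBoundary s) := by rw [hsplit, card_biUnion hdisj]

end Forest

end SimpleGraph

namespace RanTough

open Finset

theorem deg_eq_degree {α : Type*} (T : SimpleGraph α) [Fintype α] [DecidableRel T.Adj] (q : α) :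
    deg T q = T.degree q := by
  rw [deg, ← card_neighborSet_eq_degree, ← Nat.card_eq_fintype_card, Nat.card_coe_set_eq]
  rfl

section KTree

variable {V : Type*} [Fintype V] {G : SimpleGraph V} {k : ℕ}

theorem IsKTree.card_le_of_isClique (hK : IsKTree k G) {C : Finset V}
    (hC : G.IsClique (C : Set V)) : #C ≤ k + 1 := by
  classical
  obtain ⟨-, e, -, hstep⟩ := hK
  rcases C.eq_empty_or_nonempty with rfl | hne
  · simp
  obtain ⟨u, huC, hu⟩ := C.exists_max_image e.symm hne
  by_cases hlow : (e.symm u : ℕ) < k + 1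
  · calc #C ≤ #(range (k + 1)) := card_le_card_of_injOn (fun v => (e.symm v : ℕ))
          (fun v hv => mem_range.mpr ((Fin.le_iff_val_le_val.mp (hu v hv)).trans_lt hlow))
          (fun v _ w _ h => e.symm.injective (Fin.ext h))
      _ = k + 1 := card_range _
  · obtain ⟨S, hScard, -, hS⟩ := hstep (e.symm u) (by omega)
    have hsub : C.erase u ⊆ S := fun v hv => by
      obtain ⟨hvu, hvC⟩ := mem_erase.mp hv
      refine (hS v).mp ⟨by simpa using hC huC hvC hvu.symm, e.symm v, ?_, by simp⟩
      exact (hu v hvC).lt_of_ne (e.symm.injective.ne hvu)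
    have := card_le_card hsub
    rw [card_erase_of_mem huC] at this
    omega

theorem IsKTree.preconnected_induce_compl (hK : IsKTree k G) {W : Finset V} (hW : #W < k) :
    (G.induce (W : Set V)ᶜ).Preconnected := by
  obtain ⟨-, e, hbase, hstep⟩ := hK
  have toBase : ∀ i (hi : e i ∉ W), ∃ b : Fin (Fintype.card V), ∃ hb : e b ∉ W,
      (b : ℕ) < k + 1 ∧ (G.induce (W : Set V)ᶜ).Reachable ⟨e i, hi⟩ ⟨e b, hb⟩ := by
    intro i
    induction i using WellFoundedLT.induction with
    | _ i ih =>
      intro hi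
      by_cases hlow : (i : ℕ) < k + 1
      · exact ⟨i, hi, hlow, .rfl⟩
      obtain ⟨S, hScard, -, hS⟩ := hstep i (by omega)
      obtain ⟨v, hvS, hvW⟩ := not_subset.mp fun h => (card_le_card h).not_gt (hScard ▸ hW)
      obtain ⟨hadj, j, hji, rfl⟩ := (hS v).mpr hvS
      obtain ⟨b, hb, hblow, hreach⟩ := ih j hji hvW
      have hadj' : (G.induce (W : Set V)ᶜ).Adj ⟨e i, hi⟩ ⟨e j, hvW⟩ := hadj
      exact ⟨b, hb, hblow, hadj'.reachable.trans hreach⟩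
  intro x y
  obtain ⟨bx, hbx, hbxlow, hx⟩ := toBase (e.symm x) (by rw [e.apply_symm_apply]; exact x.2)
  obtain ⟨by', hby, hbylow, hy⟩ := toBase (e.symm y) (by rw [e.apply_symm_apply]; exact y.2)
  simp only [Equiv.apply_symm_apply] at hx hy
  refine hx.trans (Reachable.trans ?_ hy.symm)
  rcases eq_or_ne bx by' with rfl | hne
  · rfl
  · have hadj : (G.induce (W : Set V)ᶜ).Adj ⟨e bx, hbx⟩ ⟨e by', hby⟩ :=
      hbase bx by' hbxlow hbylow hne
    exact hadj.reachable

end KTree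

section CliqueTree

variable {V : Type*} {G : SimpleGraph V}

abbrev MaxCliques (G : SimpleGraph V) : Type _ := {Q : Finset V // IsMaximalClique G Q}

theorem exists_isMaximalClique_superset [Finite V] {C : Finset V} (hC : G.IsClique (C : Set V)) :
    ∃ Q, IsMaximalClique G Q ∧ C ⊆ Q := by
  obtain ⟨Q, hCQ, hQ⟩ :=
    Finite.exists_le_maximal (p := fun R : Finset V => G.IsClique (R : Set V)) hC
  exact ⟨Q, ⟨hQ.prop, fun R hR hQR => hQR.antisymm (hQ.le_of_ge hR hQR)⟩, hCQ⟩

theorem IsMaximalClique.not_subset {A B : Finset V} (hA : IsMaximalClique G A)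
    (hB : G.IsClique (B : Set V)) (hne : A ≠ B) : ¬ A ⊆ B :=
  fun h => hne (hA.2 B hB h)

variable {T : SimpleGraph (MaxCliques G)} {A B : MaxCliques G}

theorem IsCliqueTree.mem_of_mem_sides (hCT : IsCliqueTree G T) (hAB : T.Adj A B)
    {RA RB : MaxCliques G} (hA : (T.deleteEdges {s(A, B)}).Reachable A RA)
    (hB : (T.deleteEdges {s(A, B)}).Reachable B RB) {v : V}
    (hvA : v ∈ (RA : Finset V)) (hvB : v ∈ (RB : Finset V)) :
    v ∈ (A : Finset V) ∧ v ∈ (B : Finset V) :=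
  hCT.1.2.mem_of_preconnected_induce hAB hA hB (hCT.2 v).preconnected hvA hvB

theorem IsCliqueTree.not_reachable_induce_compl [Finite V] [DecidableEq V]
    (hCT : IsCliqueTree G T) (hAB : T.Adj A B) {W : Finset V}
    (hW : (A : Finset V) ∩ B ⊆ W) {RA RB : MaxCliques G}
    (hA : (T.deleteEdges {s(A, B)}).Reachable A RA)
    (hB : (T.deleteEdges {s(A, B)}).Reachable B RB) {x y : ((W : Set V)ᶜ : Set V)}
    (hx : (x : V) ∈ (RA : Finset V)) (hy : (y : V) ∈ (RB : Finset V)) :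
    ¬ (G.induce (W : Set V)ᶜ).Reachable x y := by
  have sides : ∀ {R R' : MaxCliques G} {x : ((W : Set V)ᶜ : Set V)},
      (T.deleteEdges {s(A, B)}).Reachable A R → (T.deleteEdges {s(A, B)}).Reachable B R' →
      (x : V) ∈ (R : Finset V) → (x : V) ∉ (R' : Finset V) := fun {_ _ x} hR hR' hxR hxR' =>
    x.2 (hW (mem_inter.mpr (hCT.mem_of_mem_sides hAB hR hR' hxR hxR')))
  rintro ⟨w⟩
  induction w generalizing RA with
  | nil => exact sides hA hB hx hy
  | @cons x u y h q ih =>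
    obtain ⟨R, hR, hxuR⟩ := exists_isMaximalClique_superset (C := {x.1, u.1}) (by
      rw [coe_pair]; exact isClique_pair.mpr fun _ => h)
    rcases hCT.1.1.preconnected.reachable_deleteEdges_or (A := A) (B := B) ⟨R, hR⟩
      with hRA | hRB
    · exact ih hRA (hxuR (by simp)) hy
    · exact sides hA hRB hx (hxuR (by simp))

end CliqueTree

section CliqueUnion

variable {V : Type*} [DecidableEq V] {G : SimpleGraph V} {T : SimpleGraph (MaxCliques G)}
  {A B : MaxCliques G} {k : ℕ}

theorem IsCliqueTree.le_card_inter [Fintype V] (hK : IsKTree k G) (hCT : IsCliqueTree G T)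
    (hAB : T.Adj A B) : k ≤ #((A : Finset V) ∩ B) := by
  by_contra! hlt
  obtain ⟨x, hxA, hxB⟩ := not_subset.mp (A.2.not_subset B.2.1 (Subtype.coe_injective.ne hAB.ne))
  obtain ⟨y, hyB, hyA⟩ := not_subset.mp (B.2.not_subset A.2.1 (Subtype.coe_injective.ne hAB.ne'))
  exact hCT.not_reachable_induce_compl hAB subset_rfl .rfl .rfl (x := ⟨x, by simp [hxB]⟩)
    (y := ⟨y, by simp [hyA]⟩) hxA hyB (hK.preconnected_induce_compl hlt _ _)

def cliqueUnion (p : T.Walk A B) : Finset V :=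
  p.support.toFinset.biUnion Subtype.val

theorem mem_cliqueUnion {p : T.Walk A B} {v : V} :
    v ∈ cliqueUnion p ↔ ∃ q ∈ p.support, v ∈ (q : Finset V) := by
  simp [cliqueUnion]

theorem card_cliqueUnion_le [Fintype V] (hK : IsKTree k G) (hCT : IsCliqueTree G T)
    (p : T.Walk A B) : #(cliqueUnion p) ≤ k + 1 + p.length := by
  induction p with
  | @nil a => simpa [cliqueUnion] using hK.card_le_of_isClique a.2.1
  | @cons a c b h q ih =>
    have hunion : cliqueUnion (.cons h q) = (a : Finset V) ∪ cliqueUnion q := by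
      simp [cliqueUnion, biUnion_insert]
    have hc : (c : Finset V) ⊆ cliqueUnion q := fun v hv =>
      mem_cliqueUnion.mpr ⟨c, q.start_mem_support, hv⟩
    have hnew : #((a : Finset V) \ c) ≤ 1 := by
      have := hK.card_le_of_isClique a.2.1
      have := hCT.le_card_inter hK h
      rw [card_sdiff, inter_comm]
      omega
    calc #(cliqueUnion (.cons h q))
          = #((a : Finset V) \ cliqueUnion q) + #(cliqueUnion q) := by
          rw [hunion, card_sdiff_add_card]
      _ ≤ 1 + (k + 1 + q.length) :=
          add_le_add ((card_le_card (sdiff_subset_sdiff subset_rfl hc)).trans hnew) ih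
      _ = k + 1 + (Walk.cons h q).length := by rw [Walk.length_cons]; ring

end CliqueUnion

section Components

variable {V : Type*} [Fintype V] [DecidableEq V] {G : SimpleGraph V}
  {T : SimpleGraph (MaxCliques G)} [Fintype (MaxCliques G)] [DecidableRel T.Adj]
  {A B : MaxCliques G}

theorem card_vertexBoundary_le_compCount (hCT : IsCliqueTree G T) (p : T.Walk A B) :
    #(T.vertexBoundary p.support.toFinset) ≤ compCount G (cliqueUnion p) := by
  set S := cliqueUnion p
  have parent : ∀ r ∈ T.vertexBoundary p.support.toFinset,
      (∃ q ∈ p.support, T.Adj q r) ∧ r ∉ p.support :=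
    fun r hr => by simpa [vertexBoundary] using hr
  have side : ∀ {q r x}, q ∈ p.support → r ∉ p.support → x ∈ p.support →
      (T.deleteEdges {s(r, q)}).Reachable q x := fun hq hr hx =>
    p.reachable_deleteEdges_of_mem_support (fun he => hr (p.fst_mem_support_of_mem_edges he))
      hq hx
  have fresh : ∀ r ∈ T.vertexBoundary p.support.toFinset, ∃ v ∈ (r : Finset V), v ∉ S := by
    intro r hr
    obtain ⟨⟨q, hq, hqr⟩, hr⟩ := parent r hr
    obtain ⟨v, hvr, hvq⟩ := not_subset.mp (r.2.not_subset q.2.1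
      (Subtype.coe_injective.ne (ne_of_mem_of_not_mem hq hr).symm))
    refine ⟨v, hvr, fun hvS => ?_⟩
    obtain ⟨ql, hql, hvql⟩ := mem_cliqueUnion.mp hvS
    exact hvq (hCT.mem_of_mem_sides hqr.symm .rfl (side hq hr hql) hvr hvql).2
  choose vtx hvtx hvtxS using fresh
  let f : T.vertexBoundary p.support.toFinset → (G.induce (S : Set V)ᶜ).ConnectedComponent :=
    fun r => (G.induce (S : Set V)ᶜ).connectedComponentMk ⟨vtx r r.2, hvtxS r r.2⟩
  have hf : Function.Injective f := by
    rintro ⟨r, hr⟩ ⟨r', hr'⟩ hrr'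
    by_contra hne
    obtain ⟨⟨q, hq, hqr⟩, hrp⟩ := parent r hr
    obtain ⟨⟨q', hq', hqr'⟩, -⟩ := parent r' hr'
    have hadj : (T.deleteEdges {s(r, q)}).Adj q' r' := by
      refine (deleteEdges_adj ..).mpr ⟨hqr', fun h => ?_⟩
      rcases Sym2.eq_iff.mp h with ⟨rfl, -⟩ | ⟨-, rfl⟩
      exacts [hrp hq', hne rfl]
    have hSep : (r : Finset V) ∩ q ⊆ S := fun v hv =>
      mem_cliqueUnion.mpr ⟨q, hq, (mem_inter.mp hv).2⟩
    exact hCT.not_reachable_induce_compl hqr.symm hSep .rfl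
      ((side hq hrp hq').trans hadj.reachable) (hvtx r hr) (hvtx r' hr')
      (ConnectedComponent.eq.mp hrr')
  calc #(T.vertexBoundary p.support.toFinset)
      = Nat.card (T.vertexBoundary p.support.toFinset) := (Nat.card_eq_finsetCard _).symm
    _ ≤ compCount G S := Nat.card_le_card_of_injective f hf

end Components

section Toughness

variable {V : Type*} {G : SimpleGraph V}

theorem le_toughness {t : ℝ≥0∞} (h : IsTough G t) : t ≤ toughness G :=
  le_sSup h

theorem toughness_lt_one_of_card_lt_compCount {S : Finset V} (h1 : 1 < compCount G S)
    (hS : #S < compCount G S) : toughness G < 1 := by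
  have hc : (compCount G S : ℝ≥0∞) ≠ 0 := by exact_mod_cast (by omega : compCount G S ≠ 0)
  calc toughness G ≤ #S / compCount G S := sSup_le fun t ht =>
        (ENNReal.le_div_iff_mul_le (.inl hc) (.inl (natCast_ne_top _))).mpr (ht S h1)
    _ < 1 := (ENNReal.div_lt_iff (.inl hc) (.inl (natCast_ne_top _))).mpr
        (by rw [one_mul]; exact_mod_cast hS)

variable [Fintype V]

theorem compCount_empty_le_one (hG : G.Connected) : compCount G ∅ ≤ 1 := by
  rw [compCount, coe_empty, Set.compl_empty,
    Nat.card_congr (induceUnivIso G).connectedComponentEquiv]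
  have := hG.preconnected.subsingleton_connectedComponent
  exact Finite.card_le_one_iff_subsingleton.mpr this

variable [DecidableEq V]

/-- Follow a Hamiltonian cycle from a vertex of `S`: the last visit to each component of `G - S`
is followed by a vertex of `S`, and distinct components give distinct such vertices. -/
theorem compCount_le_card_of_isHamiltonian (hG : G.IsHamiltonian) {S : Finset V}
    (hS : S.Nonempty) : compCount G S ≤ #S := by
  classical
  obtain ⟨s, hs⟩ := hS
  rcases subsingleton_or_nontrivial V with hV | hV
  · have : IsEmpty ((S : Set V)ᶜ : Set V) := ⟨fun x => x.2 (Subsingleton.elim s x.1 ▸ hs)⟩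
    simp [compCount]
  obtain ⟨c, hc⟩ := hG.exists_isHamiltonianCycle s
  set H := G.induce (S : Set V)ᶜ
  let P (C : H.ConnectedComponent) (i : ℕ) : Prop :=
    ∃ h : c.getVert i ∉ S, H.connectedComponentMk ⟨_, h⟩ = C
  obtain ⟨last, hlast, hle, hmax⟩ : ∃ last : H.ConnectedComponent → ℕ, (∀ C, P C (last C)) ∧
      (∀ C, last C ≤ c.length) ∧ ∀ C i, i ≤ c.length → P C i → i ≤ last C := by
    refine ⟨fun C => Nat.findGreatest (P C) c.length, fun C => ?_, fun C => Nat.findGreatest_le _,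
      fun C i => Nat.le_findGreatest⟩
    obtain ⟨x, rfl⟩ := C.exists_rep
    obtain ⟨i, hi, hil⟩ := Walk.mem_support_iff_exists_getVert.mp (hc.mem_support x.1)
    exact Nat.findGreatest_spec hil ⟨hi ▸ x.2, congrArg _ (Subtype.ext hi)⟩
  have hlt : ∀ C, last C < c.length := by
    intro C
    refine (hle C).lt_of_ne fun h => ?_
    obtain ⟨hnS, -⟩ := hlast C
    rw [h, c.getVert_length] at hnS
    exact hnS hs
  have hnext : ∀ C, c.getVert (last C + 1) ∈ S := by
    intro C
    by_contra hnS
    obtain ⟨hmem, hC⟩ := hlast C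
    have hadj : H.Adj ⟨_, hmem⟩ ⟨_, hnS⟩ := c.adj_getVert_succ (hlt C)
    have := hmax C _ (hlt C) ⟨hnS, (ConnectedComponent.sound hadj.reachable).symm.trans hC⟩
    omega
  have hinj : Function.Injective fun C => (⟨c.getVert (last C + 1), hnext C⟩ : S) := by
    intro C D h
    have hCD : last C + 1 = last D + 1 := hc.getVert_injOn
      (by simp [Nat.succ_le_of_lt (hlt C)]) (by simp [Nat.succ_le_of_lt (hlt D)])
      (Subtype.ext_iff.mp h)
    obtain ⟨_, hC⟩ := hlast C
    obtain ⟨_, hD⟩ := hlast D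
    rw [← hC, ← hD]
    exact congrArg _ (Subtype.ext (congrArg c.getVert (by omega)))
  calc compCount G S = Nat.card H.ConnectedComponent := rfl
    _ ≤ Nat.card S := Nat.card_le_card_of_injective _ hinj
    _ = #S := Nat.card_eq_finsetCard S

theorem isTough_one_of_isHamiltonian (hG : G.IsHamiltonian) : IsTough G 1 := by
  intro S hS
  rw [one_mul, Nat.cast_le]
  rcases S.eq_empty_or_nonempty with rfl | hne
  · exact absurd hS (compCount_empty_le_one hG.connected).not_gt
  · exact compCount_le_card_of_isHamiltonian hG hne

end Toughness

end RanTough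

open RanTough

/-- If the clique-tree of a RAN contains two degree-4 vertices joined by a neat fat
path (either adjacent, or all internal vertices of the path have degree exactly 3),
then `τ(G) < 1` and `G` is non-Hamiltonian. -/
theorem ran_fatPath_toughness_lt_one {V : Type*} [Fintype V] [DecidableEq V]
    (G : SimpleGraph V) (hG : IsRAN G)
    (T : SimpleGraph {Q : Finset V // IsMaximalClique G Q}) (hT : IsCliqueTree G T)
    (qi qj : {Q : Finset V // IsMaximalClique G Q}) (hij : qi ≠ qj)
    (hqi : deg T qi = 4) (hqj : deg T qj = 4)
    (p : T.Walk qi qj) (hp : p.IsPath)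
    (hfat : p.length = 1 ∨
      ∀ q ∈ p.support, q ≠ qi → q ≠ qj → deg T q = 3) :
    toughness G < 1 ∧ ¬ G.IsHamiltonian := by
  classical
  have hinner : ∀ q ∈ p.support, q ≠ qi → q ≠ qj → 3 ≤ T.degree q := by
    rcases hfat with hlen | hdeg3
    · exact fun q hq hqi hqj => ((p.eq_or_eq_of_length_eq_one hlen hq).elim hqi hqj).elim
    · exact fun q hq hqi hqj => (deg_eq_degree T q ▸ hdeg3 q hq hqi hqj).ge
  have hS := card_cliqueUnion_le hG.1 hT p
  have hbdry := hT.1.2.length_add_five_le_card_vertexBoundary hp hij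
    (deg_eq_degree T qi ▸ hqi).ge (deg_eq_degree T qj ▸ hqj).ge hinner
  have hcomp := card_vertexBoundary_le_compCount hT p
  have hτ : toughness G < 1 :=
    toughness_lt_one_of_card_lt_compCount (S := cliqueUnion p) (by omega) (by omega)
  exact ⟨hτ, fun hH => (le_toughness (isTough_one_of_isHamiltonian hH)).not_gt hτ⟩
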